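/- Let d ≥ 2, α ∈ (0,∞)^d with θ := |α|, N ∈ ℕ, and r, s ∈ ℕ^d with |r| = |s| = N. Then for every 0 ≤ n ≤ N the Hahn polynomial kernel admits the second representation H^α_n(r,s) = (N_[n]/(θ+N)_(n)) Σ_{m=0}^n a^θ_{n,m} χ^{H,α}_m(r,s); equivalently, ((θ+N)_(n)/N_[n]) Σ_{m=0}^n a^θ_{n,m} ξ^{H,α}_m(r,s) = (N_[n]/(θ+N)_(n)) Σ_{m=0}^n a^θ_{n,m} χ^{H,α}_m(r,s). -/

import Mathlib

open MeasureTheory Finset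

noncomputable section

/-- Rising factorial `(a)_(n) = a (a+1) ⋯ (a+n−1)`. -/
def rf (a : ℝ) : ℕ → ℝ
  | 0 => 1
  | n + 1 => rf a n * (a + n)

/-- Falling factorial `N_[n] = N (N−1) ⋯ (N−n+1)` of a natural number, as a real. -/
def ff (N n : ℕ) : ℝ := (N.descFactorial n : ℝ)

/-- Triangular array `a^θ_{n,m}` (meaningful for `0 ≤ m ≤ n`). -/
def acoef (θ : ℝ) (n m : ℕ) : ℝ :=
  if n = 0 then 1
  else (θ + 2 * n - 1) * (-1 : ℝ) ^ (n - m) * rf (θ + m) (n - 1) /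
    ((m.factorial : ℝ) * ((n - m).factorial : ℝ))

/-- The simplex `Δ_{d−1} = {x ∈ [0,1]^d : x₁ + ⋯ + x_d = 1}`. -/
def simplex (d : ℕ) : Set (Fin d → ℝ) :=
  {x | (∀ i, 0 ≤ x i ∧ x i ≤ 1) ∧ ∑ i, x i = 1}

/-- `ξ^α_m(x,y)`. -/
def xiK {d : ℕ} (α : Fin d → ℝ) (m : ℕ) (x y : Fin d → ℝ) : ℝ :=
  ∑ l ∈ Finset.Nat.antidiagonalTuple d m,
    ((m.factorial : ℝ) / ∏ i, ((l i).factorial : ℝ)) *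
      (rf (∑ i, α i) m / ∏ i, rf (α i) (l i)) * ∏ i, (x i * y i) ^ l i

/-- Jacobi polynomial kernel `Q^α_n(x,y)`. -/
def Qker {d : ℕ} (α : Fin d → ℝ) (n : ℕ) (x y : Fin d → ℝ) : ℝ :=
  ∑ m ∈ Finset.range (n + 1), acoef (∑ i, α i) n m * xiK α m x y

/-- Dirichlet–multinomial pmf `DM_α(l; m)`. -/
def DM {d : ℕ} (α : Fin d → ℝ) (l : Fin d → ℕ) (m : ℕ) : ℝ :=
  ((m.factorial : ℝ) / ∏ i, ((l i).factorial : ℝ)) *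
    (∏ i, rf (α i) (l i)) / rf (∑ i, α i) m

/-- `ξ^{H,α}_m(r,s)`. -/
def xiH {d : ℕ} (α : Fin d → ℝ) (m : ℕ) (r s : Fin d → ℕ) : ℝ :=
  ∑ l ∈ Finset.Nat.antidiagonalTuple d m,
    DM (fun i => α i + r i) l m * DM (fun i => α i + s i) l m / DM α l m

/-- Hahn polynomial kernel `H^α_n(r,s)` for `|r| = |s| = N`. -/
def Hker {d : ℕ} (α : Fin d → ℝ) (N n : ℕ) (r s : Fin d → ℕ) : ℝ :=
  (rf ((∑ i, α i) + N) n / ff N n) *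
    ∑ m ∈ Finset.range (n + 1), acoef (∑ i, α i) n m * xiH α m r s

/-- `χ^{H,α}_m(r,s)`. -/
def chiH {d : ℕ} (α : Fin d → ℝ) (N m : ℕ) (r s : Fin d → ℕ) : ℝ :=
  ∑ l ∈ Finset.Nat.antidiagonalTuple d m,
    (1 / DM α l m) *
      (((m.factorial : ℝ) / ∏ i, ((l i).factorial : ℝ)) * (∏ i, ff (r i) (l i)) / ff N m) *
      (((m.factorial : ℝ) / ∏ i, ((l i).factorial : ℝ)) * (∏ i, ff (s i) (l i)) / ff N m)

/-- Normalized Jacobi polynomial `R_n^{a,b}` on `[0,1]`. -/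
def Rpoly (a b : ℝ) (n : ℕ) (x : ℝ) : ℝ :=
  ∑ k ∈ Finset.range (n + 1),
    (-1 : ℝ) ^ k * (n.choose k : ℝ) * (rf ((n : ℝ) + (a + b) - 1) k / rf b k) * (1 - x) ^ k

/-- `ζ_n^{a,b}`. -/
def zeta (a b : ℝ) (n : ℕ) : ℝ :=
  if n = 0 then 1
  else ((a + b) + 2 * n - 1) * rf (a + b) (n - 1) * rf b n / ((n.factorial : ℝ) * rf a n)

/-- Hahn polynomial `h_n^{a,b}(r; N)`. -/
def hahnPoly (a b : ℝ) (N n r : ℕ) : ℝ :=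
  ∑ k ∈ Finset.range (n + 1),
    (-1 : ℝ) ^ k * (n.choose k : ℝ) * rf ((n : ℝ) + (a + b) - 1) k * ff r k /
      (rf a k * ff N k)

/-- `u^{a,b}_{N,n}`. -/
def uCoef (a b : ℝ) (N n : ℕ) : ℝ :=
  if n = 0 then 1
  else (N.choose n : ℝ) * ((a + b) + 2 * n - 1) * rf (a + b) (n - 1) * rf a n /
    (rf ((a + b) + N) n * rf b n)

/-- Beta function `B(a,b) = Γ(a)Γ(b)/Γ(a+b)`. -/
def BetaFn (a b : ℝ) : ℝ := Real.Gamma a * Real.Gamma b / Real.Gamma (a + b)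

/-- Condition (G) on the parameter vector `α`. -/
def CondG {d : ℕ} (α : Fin d → ℝ) : Prop :=
  ∀ j : Fin d, 0 < (j : ℕ) →
    (α j ≤ ∑ i ∈ Finset.univ.filter fun i : Fin d => (i : ℕ) < (j : ℕ), α i) ∧
      (1 / 2 ≤ α j ∨ 2 ≤ ∑ i ∈ Finset.univ.filter fun i : Fin d => (i : ℕ) ≤ (j : ℕ), α i)

/-- Density of the Dirichlet distribution in the coordinates `(u₁, …, u_{d−1})`. -/
def dirichletDensity (k : ℕ) (α : Fin (k + 1) → ℝ) (u : Fin k → ℝ) : ℝ :=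
  if (∀ i, 0 < u i ∧ u i < 1) ∧ ∑ i, u i < 1 then
    (Real.Gamma (∑ i, α i) / ∏ i, Real.Gamma (α i)) *
      (∏ i : Fin k, u i ^ (α (Fin.castSucc i) - 1)) * (1 - ∑ i, u i) ^ (α (Fin.last k) - 1)
  else 0

/-- The Dirichlet probability measure `D_α` on `Δ_{d−1} ⊆ ℝ^d`, `d = k + 1`. -/
def dirichlet (k : ℕ) (α : Fin (k + 1) → ℝ) : Measure (Fin (k + 1) → ℝ) :=
  ((volume : Measure (Fin k → ℝ)).withDensity fun u =>
      ENNReal.ofReal (dirichletDensity k α u)).map fun u => Fin.snoc u (1 - ∑ i, u i)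

/-!
Writing `ξ^H_m` and `χ^H_m` as coefficients of the products of hypergeometric series
`∏ᵢ ₂F₁(αᵢ + rᵢ, αᵢ + sᵢ; αᵢ; t)` and `∏ᵢ ₂F₁(-rᵢ, -sᵢ; αᵢ; t)`, Euler's transformation
`₂F₁(a + x, a + y; a; t) = (1 - t)^(-(a + x + y)) ₂F₁(-x, -y; a; t)` expresses every `ξ^H_m` as a
triangular combination `∑_{K ≤ m} T(m, K) χ^H_K`. After exchanging the order of summation the
theorem reduces to the scalar identity `∑_{m=K}^n a_{n,m} T(m, K) = (N_[n] / (θ+N)_(n))² a_{n,K}`,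
a terminating balanced (Pfaff–Saalschütz) summation.
-/

open Polynomial

lemma rf_eq_eval_ascPochhammer (a : ℝ) (n : ℕ) : rf a n = (ascPochhammer ℝ n).eval a := by
  induction n with
  | zero => simp [rf]
  | succ n ih => rw [rf, ih, ascPochhammer_succ_eval]

lemma rf_add (a : ℝ) (m n : ℕ) : rf a (m + n) = rf a m * rf (a + m) n := by
  simp [rf_eq_eval_ascPochhammer, ← ascPochhammer_mul, eval_comp]

lemma rf_pos {a : ℝ} (ha : 0 < a) (n : ℕ) : 0 < rf a n := by
  rw [rf_eq_eval_ascPochhammer]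
  exact ascPochhammer_pos n a ha

def ffR (x : ℝ) (n : ℕ) : ℝ := (descPochhammer ℝ n).eval x

lemma ffR_succ_left (x : ℝ) (n : ℕ) : ffR x (n + 1) = x * ffR (x - 1) n := by
  simp [ffR, descPochhammer_succ_left, eval_comp]

lemma ffR_add (x : ℝ) (k w : ℕ) : ffR x (k + w) = ffR x k * ffR (x - k) w := by
  simp [ffR, ← descPochhammer_mul, eval_comp]

lemma ff_eq_ffR (N k : ℕ) : ff N k = ffR N k := by
  simp [ff, ffR, descPochhammer_eval_eq_descFactorial]

lemma ffR_eq_neg_one_pow_mul_rf (x : ℝ) (n : ℕ) : ffR x n = (-1) ^ n * rf (-x) n := by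
  rw [ffR, rf_eq_eval_ascPochhammer, ascPochhammer_eval_neg_eq_descPochhammer, ← mul_assoc,
    ← mul_pow]
  simp

lemma rf_eq_neg_one_pow_mul_ffR (x : ℝ) (n : ℕ) : rf x n = (-1) ^ n * ffR (-x) n := by
  rw [ffR_eq_neg_one_pow_mul_rf, neg_neg, ← mul_assoc, ← mul_pow]
  simp

lemma ffR_eq_rf (x : ℝ) (n : ℕ) : ffR x n = rf (x - n + 1) n := by
  rw [ffR, rf_eq_eval_ascPochhammer, descPochhammer_eval_eq_ascPochhammer]

lemma ff_ne_zero {N k : ℕ} (h : k ≤ N) : ff N k ≠ 0 := by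
  simpa [ff, Nat.descFactorial_eq_zero_iff_lt] using h

lemma ffR_mul_ffR (x y : ℝ) (k : ℕ) : ffR x k * ffR y k = rf (-x) k * rf (-y) k := by
  have hsq : ((-1 : ℝ) ^ k) * (-1) ^ k = 1 := by rw [← mul_pow]; norm_num
  rw [ffR_eq_neg_one_pow_mul_rf, ffR_eq_neg_one_pow_mul_rf]
  linear_combination (rf (-x) k * rf (-y) k) * hsq

lemma rf_add_eq_sum_antidiagonal (a x : ℝ) (n : ℕ) :
    rf (a + x) n
      = ∑ ij ∈ antidiagonal n, (n.choose ij.1 : ℝ) * (ffR x ij.1 * rf (a + ij.1) ij.2) := by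
  induction n generalizing a x with
  | zero => simp [rf, ffR]
  | succ n ih =>
    rw [sum_antidiagonal_choose_succ_mul (fun i j => ffR x i * rf (a + i) j)]
    have hleft : ∀ ij ∈ antidiagonal n,
        (n.choose ij.1 : ℝ) * (ffR x ij.1 * rf (a + ij.1) (ij.2 + 1))
          = (a + n) * ((n.choose ij.1 : ℝ) * (ffR x ij.1 * rf (a + ij.1) ij.2)) := by
      intro ij hij
      rw [← mem_antidiagonal.mp hij, rf]
      push_cast; ring
    have hright : ∀ ij ∈ antidiagonal n,
        (n.choose ij.2 : ℝ) * (ffR x (ij.1 + 1) * rf (a + (ij.1 + 1 : ℕ)) ij.2)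
          = x * ((n.choose ij.1 : ℝ) * (ffR (x - 1) ij.1 * rf (a + 1 + ij.1) ij.2)) := by
      intro ij hij
      rw [Nat.choose_symm_of_eq_add (mem_antidiagonal.mp hij).symm, ffR_succ_left]
      push_cast; ring_nf
    rw [sum_congr rfl hleft, sum_congr rfl hright, ← mul_sum, ← mul_sum, ← ih, ← ih, rf]
    ring_nf

lemma rf_add_eq_sum_range (a x : ℝ) (n : ℕ) :
    rf (a + x) n = ∑ u ∈ range (n + 1), (n.choose u : ℝ) * ffR x u * rf (a + u) (n - u) := by
  rw [rf_add_eq_sum_antidiagonal, Nat.sum_antidiagonal_eq_sum_range_succ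
    (fun i j => (n.choose i : ℝ) * (ffR x i * rf (a + i) j))]
  simp only [mul_assoc]

lemma sum_choose_mul_ffR_mul_rf {v l : ℕ} (hvl : v ≤ l) (a x : ℝ) :
    ∑ u ∈ range (v + 1), (v.choose u : ℝ) * ffR x u * rf (a + u) (l - u)
      = rf (a + x) v * rf (a + v) (l - v) := by
  rw [rf_add_eq_sum_range, sum_mul]
  refine sum_congr rfl fun u hu => ?_
  have huv : u ≤ v := Nat.lt_succ_iff.mp (mem_range.mp hu)
  have hsplit := rf_add (a + u) (v - u) (l - v)
  rw [show v - u + (l - v) = l - u by omega, Nat.cast_sub huv, add_add_sub_cancel] at hsplit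
  rw [hsplit]
  ring

-- Coefficient form of Euler's transformation: expand `rf (a + x + y) (l - k)` with
-- `rf_add_eq_sum_range` and resum along the diagonals `k + w = v`.
lemma rf_add_mul_rf_add (l : ℕ) (x y a : ℝ) :
    rf (a + x) l * rf (a + y) l
      = ∑ k ∈ range (l + 1), (l.choose k : ℝ) * ffR x k * ffR y k
          * rf (a + x + y) (l - k) * rf (a + k) (l - k) := by
  set F : ℕ → ℕ → ℝ := fun k w => (l.choose k : ℝ) * ((l - k).choose w : ℝ) * ffR x k
    * ffR y (k + w) * rf (a + x + k + w) (l - k - w) * rf (a + k) (l - k) with hF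
  have hexpand : ∀ k ∈ range (l + 1),
      (l.choose k : ℝ) * ffR x k * ffR y k * rf (a + x + y) (l - k) * rf (a + k) (l - k)
        = ∑ w ∈ range (l + 1 - k), F k w := by
    intro k hk
    have h := rf_add_eq_sum_range (a + x + k) (y - k) (l - k)
    rw [show a + x + k + (y - k) = a + x + y by ring] at h
    rw [h, show l + 1 - k = l - k + 1 by have := mem_range.mp hk; omega, mul_sum, sum_mul]
    refine sum_congr rfl fun w _ => ?_
    simp only [hF, ffR_add]
    ring
  have hcollect : ∀ v ∈ range (l + 1), ∑ k ∈ range (v + 1), F k (v - k)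
      = rf (a + x) l * ((l.choose v : ℝ) * ffR y v * rf (a + v) (l - v)) := by
    intro v hv
    have hvl : v ≤ l := Nat.lt_succ_iff.mp (mem_range.mp hv)
    have hterm : ∀ k ∈ range (v + 1), F k (v - k) = ((l.choose v : ℝ) * ffR y v
        * rf (a + x + v) (l - v)) * ((v.choose k : ℝ) * ffR x k * rf (a + k) (l - k)) := by
      intro k hk
      have hkv : k ≤ v := Nat.lt_succ_iff.mp (mem_range.mp hk)
      have hchoose : (l.choose k : ℝ) * ((l - k).choose (v - k) : ℝ)
          = (l.choose v : ℝ) * (v.choose k : ℝ) := by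
        exact_mod_cast (Nat.choose_mul (n := l) hkv).symm
      simp only [hF, Nat.add_sub_cancel' hkv, Nat.cast_sub hkv, add_add_sub_cancel,
        show l - k - (v - k) = l - v by omega]
      linear_combination
        (ffR x k * ffR y v * rf (a + x + v) (l - v) * rf (a + k) (l - k)) * hchoose
    have hsplit := rf_add (a + x) v (l - v)
    rw [Nat.add_sub_cancel' hvl] at hsplit
    rw [sum_congr rfl hterm, ← mul_sum, sum_choose_mul_ffR_mul_rf hvl, hsplit]
    ring
  rw [sum_congr rfl hexpand, ← sum_range_diag_flip, sum_congr rfl hcollect, ← mul_sum,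
    rf_add_eq_sum_range a y l]

-- `(1 - t) ^ (-a)`
def risingSeries (a : ℝ) : PowerSeries ℝ := PowerSeries.mk fun k => rf a k / k.factorial

lemma risingSeries_eq_rescale_binomialSeries (a : ℝ) :
    risingSeries a = PowerSeries.rescale (-1) (PowerSeries.binomialSeries ℝ (-a)) := by
  ext n
  have hn : (n.factorial : ℝ) ≠ 0 := by positivity
  simp only [risingSeries, PowerSeries.coeff_mk, PowerSeries.coeff_rescale,
    PowerSeries.binomialSeries_coeff, smul_eq_mul, mul_one, Ring.choose_neg', Int.negOnePow_def,
    Units.smul_def, zsmul_eq_mul]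
  rw [div_eq_iff hn, rf_eq_eval_ascPochhammer, ← Polynomial.ascPochhammer_smeval_eq_eval,
    ← Ring.factorial_nsmul_multichoose_eq_ascPochhammer, nsmul_eq_mul]
  have hsign : ((((-1 : ℤˣ) ^ (n : ℤ) : ℤˣ) : ℤ) : ℝ) = (-1) ^ n := by simp
  rw [hsign, ← mul_assoc, ← mul_pow]
  norm_num
  ring

lemma risingSeries_add (a b : ℝ) : risingSeries (a + b) = risingSeries a * risingSeries b := by
  simp only [risingSeries_eq_rescale_binomialSeries, neg_add, PowerSeries.binomialSeries_add,
    map_mul]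

lemma prod_risingSeries {ι : Type*} (s : Finset ι) (a : ι → ℝ) :
    ∏ i ∈ s, risingSeries (a i) = risingSeries (∑ i ∈ s, a i) := by
  classical
  induction s using Finset.induction_on with
  | empty => simp [risingSeries_eq_rescale_binomialSeries]
  | insert i s hi ih => rw [prod_insert hi, sum_insert hi, ih, risingSeries_add]

-- the hypergeometric series `₂F₁(A, B; C; t)`
def gaussSeries (A B C : ℝ) : PowerSeries ℝ :=
  PowerSeries.mk fun k => rf A k * rf B k / (rf C k * k.factorial)

theorem gaussSeries_euler {a : ℝ} (ha : 0 < a) (x y : ℝ) :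
    gaussSeries (a + x) (a + y) a = gaussSeries (-x) (-y) a * risingSeries (a + x + y) := by
  ext l
  rw [PowerSeries.coeff_mul, Nat.sum_antidiagonal_eq_sum_range_succ
    (fun i j => PowerSeries.coeff i (gaussSeries (-x) (-y) a) *
      PowerSeries.coeff j (risingSeries (a + x + y)))]
  simp only [gaussSeries, risingSeries, PowerSeries.coeff_mk]
  rw [div_eq_iff (by have := rf_pos ha l; positivity), sum_mul, rf_add_mul_rf_add]
  refine sum_congr rfl fun k hk => ?_
  have hkl : k ≤ l := Nat.lt_succ_iff.mp (mem_range.mp hk)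
  have hsplit := rf_add a k (l - k)
  rw [Nat.add_sub_cancel' hkl] at hsplit
  have := rf_pos ha k
  rw [Nat.cast_choose ℝ hkl, hsplit, ← ffR_mul_ffR]
  field_simp

lemma coeff_prod_eq_sum_antidiagonalTuple {d : ℕ} (f : Fin d → PowerSeries ℝ) (m : ℕ) :
    PowerSeries.coeff m (∏ i, f i) =
      ∑ l ∈ Finset.Nat.antidiagonalTuple d m, ∏ i, PowerSeries.coeff (l i) (f i) := by
  classical
  rw [PowerSeries.coeff_prod, ← piAntidiag_univ_fin_eq_antidiagonalTuple, finsuppAntidiag,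
    sum_map, ← sum_attach (piAntidiag _ _)]
  rfl

lemma xiH_eq_coeff_prod_gaussSeries {d : ℕ} (α : Fin d → ℝ) {N : ℕ} {r s : Fin d → ℕ}
    (hr : ∑ i, r i = N) (hs : ∑ i, s i = N) (m : ℕ) :
    xiH α m r s = m.factorial * rf (∑ i, α i) m / rf ((∑ i, α i) + N) m ^ 2 *
      PowerSeries.coeff m (∏ i, gaussSeries (α i + r i) (α i + s i) (α i)) := by
  have hsum : ∀ t : Fin d → ℕ, ∑ i, t i = N → ∑ i, (α i + t i) = (∑ i, α i) + N := by
    intro t ht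
    rw [sum_add_distrib, ← Nat.cast_sum, ht]
  rw [xiH, coeff_prod_eq_sum_antidiagonalTuple, mul_sum]
  refine sum_congr rfl fun l _ => ?_
  have hl : ∏ i, ((l i).factorial : ℝ) ≠ 0 := by positivity
  simp only [DM, gaussSeries, PowerSeries.coeff_mk, hsum r hr, hsum s hs, prod_div_distrib,
    prod_mul_distrib]
  field_simp

lemma chiH_eq_coeff_prod_gaussSeries {d : ℕ} (α : Fin d → ℝ) (N K : ℕ) (r s : Fin d → ℕ) :
    chiH α N K r s = K.factorial * rf (∑ i, α i) K / ff N K ^ 2 *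
      PowerSeries.coeff K (∏ i, gaussSeries (-r i) (-s i) (α i)) := by
  rw [chiH, coeff_prod_eq_sum_antidiagonalTuple, mul_sum]
  refine sum_congr rfl fun l _ => ?_
  have hl : ∏ i, ((l i).factorial : ℝ) ≠ 0 := by positivity
  have hprod : ∏ i, rf (-r i) (l i) * rf (-s i) (l i) / (rf (α i) (l i) * (l i).factorial)
      = (∏ i, ff (r i) (l i)) * (∏ i, ff (s i) (l i))
        / ((∏ i, rf (α i) (l i)) * ∏ i, ((l i).factorial : ℝ)) := by
    simp only [← prod_mul_distrib, ← prod_div_distrib, ff_eq_ffR, ffR_mul_ffR]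
  simp only [DM, gaussSeries, PowerSeries.coeff_mk, hprod]
  field_simp

def connCoeff (θ : ℝ) (N m K : ℕ) : ℝ :=
  (m.choose K : ℝ) * rf θ m * ff N K ^ 2 * rf (θ + 2 * N) (m - K) / (rf (θ + N) m ^ 2 * rf θ K)

lemma prod_gaussSeries_eq {d : ℕ} {α : Fin d → ℝ} (hα : ∀ i, 0 < α i) {N : ℕ}
    {r s : Fin d → ℕ} (hr : ∑ i, r i = N) (hs : ∑ i, s i = N) :
    ∏ i, gaussSeries (α i + r i) (α i + s i) (α i)
      = (∏ i, gaussSeries (-r i) (-s i) (α i)) * risingSeries ((∑ i, α i) + 2 * N) := by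
  have hsum : ∑ i, (α i + r i + s i) = (∑ i, α i) + 2 * N := by
    simp only [sum_add_distrib, ← Nat.cast_sum, hr, hs]
    ring
  simp only [gaussSeries_euler (hα _), prod_mul_distrib, prod_risingSeries, hsum]

lemma xiH_eq_sum_connCoeff_mul_chiH {d : ℕ} {α : Fin d → ℝ} (hα : ∀ i, 0 < α i)
    (hθ : 0 < ∑ i, α i) {N : ℕ} {r s : Fin d → ℕ} (hr : ∑ i, r i = N) (hs : ∑ i, s i = N)
    {m : ℕ} (hm : m ≤ N) :
    xiH α m r s = ∑ K ∈ range (m + 1), connCoeff (∑ i, α i) N m K * chiH α N K r s := by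
  rw [xiH_eq_coeff_prod_gaussSeries α hr hs, prod_gaussSeries_eq hα hr hs, PowerSeries.coeff_mul,
    Nat.sum_antidiagonal_eq_sum_range_succ (fun i j =>
      PowerSeries.coeff i (∏ k, gaussSeries (-r k) (-s k) (α k)) *
        PowerSeries.coeff j (risingSeries ((∑ i, α i) + 2 * N))), mul_sum]
  refine sum_congr rfl fun K hK => ?_
  have hKm : K ≤ m := Nat.lt_succ_iff.mp (mem_range.mp hK)
  have := ff_ne_zero (hKm.trans hm)
  have := rf_pos hθ K
  have := rf_pos (a := (∑ i, α i) + N) (by positivity) m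
  rw [chiH_eq_coeff_prod_gaussSeries, connCoeff, Nat.cast_choose ℝ hKm]
  simp only [risingSeries, PowerSeries.coeff_mk]
  field_simp

theorem saalschutz_sum {b c e : ℝ} {M : ℕ} (hbal : c + b + 1 = 2 * e + M) :
    ∑ j ∈ range (M + 1), (-1) ^ (M - j) * (M.choose j : ℝ) * rf c j * rf b j
        * rf (e + j) (M - j) ^ 2 = rf (e - c) M * rf (e - b) M := by
  rw [sub_eq_add_neg, sub_eq_add_neg, rf_add_mul_rf_add]
  refine sum_congr rfl fun j hj => ?_
  have hjM : j ≤ M := Nat.lt_succ_iff.mp (mem_range.mp hj)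
  have hshift : -(e + -c + -b) - ((M - j : ℕ) : ℝ) + 1 = e + j := by
    rw [Nat.cast_sub hjM]
    linarith
  rw [mul_assoc (M.choose j : ℝ), ffR_mul_ffR, neg_neg, neg_neg,
    rf_eq_neg_one_pow_mul_ffR (e + -c + -b), ffR_eq_rf, hshift]
  ring

lemma acoef_mul_connCoeff {θ : ℝ} (hθ : 0 < θ) (N : ℕ) {n K j : ℕ} (hn : n ≠ 0)
    (hKj : K + j ≤ n) :
    acoef θ n (K + j) * connCoeff θ N (K + j) K
      = (θ + 2 * n - 1) * rf (θ + K) (n - 1) * ff N K ^ 2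
          / (K.factorial * (n - K).factorial * rf (θ + N) n ^ 2)
        * ((-1) ^ (n - K - j) * ((n - K).choose j : ℝ) * rf (θ + n + K - 1) j
          * rf (θ + 2 * N) j * rf (θ + N + K + j) (n - K - j) ^ 2) := by
  have hθK : rf θ (K + j) = rf θ K * rf (θ + K) j := rf_add θ K j
  have hshift : rf (θ + ↑(K + j)) (n - 1)
      = rf (θ + K) (n - 1) * rf (θ + n + K - 1) j / rf (θ + K) j := by
    have h1 := rf_add (θ + K) j (n - 1)
    have h2 := rf_add (θ + K) (n - 1) j
    rw [show θ + K + (j : ℝ) = θ + ↑(K + j) by push_cast; ring] at h1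
    rw [add_comm (n - 1) j, show θ + K + ((n - 1 : ℕ) : ℝ) = θ + n + K - 1 by
      push_cast [Nat.cast_sub (Nat.one_le_iff_ne_zero.mpr hn)]; ring] at h2
    rw [eq_div_iff (rf_pos (a := θ + K) (by positivity) j).ne']
    linear_combination h1.symm.trans h2
  have hθN : rf (θ + N) n = rf (θ + N) (K + j) * rf (θ + N + K + j) (n - K - j) := by
    have key := rf_add (θ + N) (K + j) (n - K - j)
    rwa [show K + j + (n - K - j) = n by omega, Nat.cast_add, ← add_assoc] at key
  have := rf_pos hθ K
  have := rf_pos (a := θ + K) (by positivity) j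
  have := rf_pos (a := θ + N + K + j) (by positivity) (n - K - j)
  rw [acoef, if_neg hn, connCoeff, hθK, hshift, hθN, Nat.cast_choose ℝ (by omega : j ≤ n - K),
    Nat.cast_choose ℝ (Nat.le_add_right K j), Nat.add_sub_cancel_left,
    show n - (K + j) = n - K - j by omega]
  field_simp

lemma sum_acoef_mul_connCoeff {θ : ℝ} (hθ : 0 < θ) {N n K : ℕ} (hKn : K ≤ n) :
    ∑ m ∈ Ico K (n + 1), acoef θ n m * connCoeff θ N m K
      = (ff N n / rf (θ + N) n) ^ 2 * acoef θ n K := by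
  rcases Nat.eq_zero_or_pos n with rfl | hn
  · obtain rfl : K = 0 := by omega
    simp [acoef, connCoeff, rf, ff]
  have hne : n ≠ 0 := hn.ne'
  rw [sum_Ico_eq_sum_range, show n + 1 - K = n - K + 1 by omega,
    sum_congr rfl fun j hj => acoef_mul_connCoeff hθ N hne (by have := mem_range.mp hj; omega),
    ← mul_sum, saalschutz_sum (by push_cast [Nat.cast_sub hKn]; ring)]
  have hfall : rf (θ + N + K - (θ + n + K - 1)) (n - K) = ffR (N - K) (n - K) := by
    rw [ffR_eq_rf]
    push_cast [Nat.cast_sub hKn]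
    ring_nf
  have hrise : rf (θ + N + K - (θ + 2 * N)) (n - K) = (-1) ^ (n - K) * ffR (N - K) (n - K) := by
    rw [rf_eq_neg_one_pow_mul_ffR]
    ring_nf
  have hff : ff N n = ff N K * ffR (N - K) (n - K) := by
    rw [ff_eq_ffR, ff_eq_ffR, ← ffR_add, Nat.add_sub_cancel' hKn]
  have := rf_pos (a := θ + N) (by positivity) n
  rw [hfall, hrise, hff, acoef, if_neg hne]
  field_simp

/-- second (Gasper-type) representation of the Hahn polynomial kernel. -/
theorem stmt_5 (d : ℕ) (hd : 2 ≤ d) (α : Fin d → ℝ) (hα : ∀ i, 0 < α i)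
    (N : ℕ) (r s : Fin d → ℕ) (hr : ∑ i, r i = N) (hs : ∑ i, s i = N)
    (n : ℕ) (hn : n ≤ N) :
    Hker α N n r s = (ff N n / rf ((∑ i, α i) + N) n) *
      ∑ m ∈ Finset.range (n + 1), acoef (∑ i, α i) n m * chiH α N m r s := by
  have hθ : 0 < ∑ i, α i := sum_pos (fun i _ => hα i) ⟨⟨0, by omega⟩, mem_univ _⟩
  have hxi : ∀ m ∈ range (n + 1), acoef (∑ i, α i) n m * xiH α m r s
      = ∑ K ∈ range (m + 1),
          acoef (∑ i, α i) n m * connCoeff (∑ i, α i) N m K * chiH α N K r s := by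
    intro m hm
    rw [xiH_eq_sum_connCoeff_mul_chiH hα hθ hr hs (by have := mem_range.mp hm; omega), mul_sum]
    simp only [mul_assoc]
  have hswap : ∑ m ∈ range (n + 1), ∑ K ∈ range (m + 1),
        acoef (∑ i, α i) n m * connCoeff (∑ i, α i) N m K * chiH α N K r s
      = ∑ K ∈ range (n + 1), ∑ m ∈ Ico K (n + 1),
        acoef (∑ i, α i) n m * connCoeff (∑ i, α i) N m K * chiH α N K r s := by
    simp only [range_eq_Ico]
    exact (sum_Ico_Ico_comm 0 (n + 1) _).symm
  have := ff_ne_zero hn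
  have := rf_pos (a := (∑ i, α i) + N) (by positivity) n
  rw [Hker, sum_congr rfl hxi, hswap, mul_sum, mul_sum]
  refine sum_congr rfl fun K hK => ?_
  rw [← sum_mul, sum_acoef_mul_connCoeff hθ (by have := mem_range.mp hK; omega)]
  field_simp
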